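/- arXiv:1810.02602 — 6 statements merged into one kernel-verified Lean document; each statement's English description precedes it below -/
import Mathlib

section
/- Every regular simple graph on more than 2 vertices is uniquely determined (up to isomorphism) by any one of its vertex-deleted subgraphs: if G and H are regular graphs on n > 2 vertices and G−u is isomorphic to H−w for some vertices u of G and w of H, and G and H have the same degree of regularity deducible from these cards, then G ≅ H. Equivalently, from a card G' of a regular graph, the original graph is reconstructed by adding a vertex adjacent to all vertices of minimum degree in G' (or an isolated vertex if G' is empty). -/
open SimpleGraph
open scoped Classical

/-!
In a `k`-regular graph, deleting `u` lowers the degree of exactly the neighbours of `u`, to `k - 1`;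
so the neighbourhood of `u` is read off the card `G - u` as its set of vertices of degree `< k`.
An isomorphism of cards preserves degrees, hence matches the neighbourhood of `u` with that of `w`,
and therefore extends to an isomorphism `G ≃g H` by `u ↦ w`.
-/

namespace SimpleGraph

variable {V W : Type*} {G : SimpleGraph V} {H : SimpleGraph W}

theorem degree_induce_compl_singleton [Fintype V] (u : V) (v : ({u}ᶜ : Set V)) :
    (G.induce ({u}ᶜ : Set V)).degree v = if G.Adj u v then G.degree v - 1 else G.degree v := by
  rw [← card_neighborFinset_eq_degree, ← card_neighborFinset_eq_degree,
    ← Finset.card_map, map_neighborFinset_induce, Set.toFinset_compl, Set.toFinset_singleton,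
    ← Finset.sdiff_eq_inter_compl, ← Finset.erase_eq]
  split_ifs with h
  · exact Finset.card_erase_of_mem (by simpa using h.symm)
  · exact congrArg _ (Finset.erase_eq_of_notMem (by simpa [G.adj_comm] using h))

theorem IsRegularOfDegree.adj_iff_degree_induce_compl_singleton_lt [Fintype V] {k : ℕ}
    (hG : G.IsRegularOfDegree k) (u : V) (v : ({u}ᶜ : Set V)) :
    G.Adj u v ↔ (G.induce ({u}ᶜ : Set V)).degree v < k := by
  rw [degree_induce_compl_singleton, hG.degree_eq]
  split_ifs with h
  · have : 0 < k := hG.degree_eq (v : V) ▸ G.degree_pos_iff_exists_adj _ |>.mpr ⟨u, h.symm⟩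
    simp only [h, true_iff]
    omega
  · simp [h]

section ExtendIso

variable {u : V} {w : W} (φ : G.induce ({u}ᶜ : Set V) ≃g H.induce ({w}ᶜ : Set W))

noncomputable def Iso.extendEquiv : V ≃ W :=
  (Equiv.optionSubtypeNe u).symm.trans
    -- `↥{u}ᶜ` is only definitionally `{v // v ≠ u}`; the annotation makes the composite typecheck
    ((Equiv.optionCongr (α := {v // v ≠ u}) (β := {x // x ≠ w}) φ.toEquiv).trans
      (Equiv.optionSubtypeNe w))

@[simp]
theorem Iso.extendEquiv_self : φ.extendEquiv u = w := by
  simp only [Iso.extendEquiv, Equiv.trans_apply, Equiv.optionSubtypeNe_symm_self]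
  rfl

theorem Iso.extendEquiv_of_ne {v : V} (hv : v ≠ u) : φ.extendEquiv v = φ ⟨v, hv⟩ := by
  simp only [Iso.extendEquiv, Equiv.trans_apply, Equiv.optionSubtypeNe_symm_of_ne hv]
  rfl

noncomputable def Iso.ofInduceComplSingleton
    (hφ : ∀ v : ({u}ᶜ : Set V), G.Adj u v ↔ H.Adj w (φ v)) : G ≃g H where
  toEquiv := φ.extendEquiv
  map_rel_iff' {a b} := by
    by_cases ha : a = u <;> by_cases hb : b = u
    · simp [ha, hb]
    · rw [ha, φ.extendEquiv_self, φ.extendEquiv_of_ne hb]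
      exact (hφ ⟨b, hb⟩).symm
    · rw [hb, φ.extendEquiv_self, φ.extendEquiv_of_ne ha, G.adj_comm, H.adj_comm]
      exact (hφ ⟨a, ha⟩).symm
    · rw [φ.extendEquiv_of_ne ha, φ.extendEquiv_of_ne hb]
      exact φ.map_adj_iff

end ExtendIso

end SimpleGraph

theorem stmt2_general {V W : Type*} [Fintype V] [Fintype W]
    (G : SimpleGraph V) (H : SimpleGraph W) (k : ℕ)
    (hG : G.IsRegularOfDegree k) (hH : H.IsRegularOfDegree k)
    (u : V) (w : W)
    (hiso : Nonempty ((G.induce ({u}ᶜ : Set V)) ≃g (H.induce ({w}ᶜ : Set W)))) :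
    Nonempty (G ≃g H) := by
  obtain ⟨φ⟩ := hiso
  refine ⟨φ.ofInduceComplSingleton fun v => ?_⟩
  rw [hG.adj_iff_degree_induce_compl_singleton_lt, hH.adj_iff_degree_induce_compl_singleton_lt,
    φ.degree_eq]

/-- A regular graph on more than two vertices is determined, among regular graphs of the
same degree, by any one vertex-deleted subgraph. -/
theorem stmt2 {V W : Type*} [Fintype V] [Fintype W]
    (G : SimpleGraph V) (H : SimpleGraph W) (k : ℕ)
    (hG : G.IsRegularOfDegree k) (hH : H.IsRegularOfDegree k)
    (hn : 2 < Fintype.card V) (hcard : Fintype.card V = Fintype.card W)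
    (u : V) (w : W)
    (hiso : Nonempty ((G.induce ({u}ᶜ : Set V)) ≃g (H.induce ({w}ᶜ : Set W)))) :
    Nonempty (G ≃g H) :=
  stmt2_general G H k hG hH u w hiso
end

section
/- Let G be a simple graph and v a vertex of G. The card G−v is ds-completable if and only if every vertex u ≠ v that is not adjacent to v has degree (in G) different from d_w − 1 for all neighbours w of v. Equivalently, letting D_v = {u : d_u = d_w − 1 for some w ∈ N(v)} and N[v] the closed neighbourhood of v, the card G−v is ds-completable iff D_v ⊆ N[v]. -/
open SimpleGraph Finset
open scoped Classical

variable {V : Type*}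

/-- The degree of a vertex `u` in a simple graph `G`. -/
noncomputable def deg (G : SimpleGraph V) (u : V) : ℕ := (G.neighborSet u).ncard

/-- The degree of `u` in the card `G − v` (the vertex-deleted subgraph at `v`). -/
noncomputable def cardDeg (G : SimpleGraph V) (v u : V) : ℕ := (G.neighborSet u \ {v}).ncard

/-- The card `G − v` is ds-completable: for each degree `d`, the vertices of degree `d`
in `G − v` are either all neighbours of `v` in `G` or all non-neighbours of `v` in `G`. -/
def DsCompletable (G : SimpleGraph V) (v : V) : Prop :=
  ∀ d : ℕ, (∀ u, u ≠ v → cardDeg G v u = d → G.Adj v u) ∨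
           (∀ u, u ≠ v → cardDeg G v u = d → ¬ G.Adj v u)

/-- A vertex is bad if the graph contains a vertex of degree one less. -/
def Bad (G : SimpleGraph V) (v : V) : Prop := ∃ w, deg G w + 1 = deg G v

/-- A vertex is dull if the graph contains a vertex of degree one more. -/
def Dull (G : SimpleGraph V) (v : V) : Prop := ∃ w, deg G w = deg G v + 1

/-- ε(s,t): the number of stubs on `s` used by edges from `s` to `t`
(for disjoint `s`, `t` this is the number of edges between them; for `s = t`
it is twice the number of edges inside `s`). -/
noncomputable def stubs (G : SimpleGraph V) (s t : Finset V) : ℕ :=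
  ((s ×ˢ t).filter fun p => G.Adj p.1 p.2).card

/-- A vertex set is neighbourly if no vertex outside the set has a degree one less
than that of a vertex in the set. -/
def Neighbourly (G : SimpleGraph V) (K : Finset V) : Prop :=
  ∀ u ∉ K, ∀ w ∈ K, deg G u + 1 ≠ deg G w

/-- A vertex set is `d`-neighbourly if it contains a vertex `v` of degree `d` such that
no vertex outside the set has a degree one less than that of any member other than `v`. -/
def DNeighbourly (G : SimpleGraph V) (d : ℕ) (K : Finset V) : Prop :=
  ∃ v ∈ K, deg G v = d ∧ ∀ u ∉ K, ∀ w ∈ K, w ≠ v → deg G u + 1 ≠ deg G w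

lemma cardDeg_of_not_adj (G : SimpleGraph V) {v u : V} (h : ¬ G.Adj v u) :
    cardDeg G v u = deg G u :=
  congrArg Set.ncard (Set.sdiff_singleton_eq_self fun hv => h (G.adj_symm hv))

lemma cardDeg_add_one_of_adj (G : SimpleGraph V) {v u : V} (h : G.Adj v u)
    (hfin : (G.neighborSet u).Finite) : cardDeg G v u + 1 = deg G u :=
  Set.ncard_sdiff_singleton_add_one (G.adj_symm h) hfin

lemma dsCompletable_iff (G : SimpleGraph V) (v : V) :
    DsCompletable G v ↔
      ∀ u, u ≠ v → ¬ G.Adj v u → ∀ w, G.Adj v w → cardDeg G v u ≠ cardDeg G v w := by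
  constructor
  · intro hds u hu hvu w hvw hcard
    rcases hds (cardDeg G v u) with hall | hnone
    · exact hvu (hall u hu rfl)
    · exact hnone w hvw.ne' hcard.symm hvw
  · intro H d
    by_contra! ⟨⟨u, hu, hud, hvu⟩, w, -, hwd, hvw⟩
    exact H u hu hvu w hvw (hud.trans hwd.symm)

/-- Mulla's criterion: the card `G − v` is ds-completable iff every non-neighbour `u ≠ v`
of `v` has degree different from `d_w − 1` for every neighbour `w` of `v`. -/
theorem stmt3 [Fintype V] (G : SimpleGraph V) (v : V) :
    DsCompletable G v ↔
      ∀ u : V, u ≠ v → ¬ G.Adj v u → ∀ w : V, G.Adj v w → deg G u + 1 ≠ deg G w := by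
  rw [dsCompletable_iff]
  refine forall₃_congr fun u _ hvu => forall₂_congr fun w hvw => ?_
  rw [cardDeg_of_not_adj G hvu, ← cardDeg_add_one_of_adj G hvw (Set.toFinite _)]
  exact (add_left_inj 1).not.symm
end

section
/- Let G be a simple graph admitting the switch at distinct vertices a,b,c,d (i.e., ac and bd are edges, ad and bc are non-edges), and let G' = G − ac − bd + ad + bc. If v ∉ {a,b,c,d} and the card G−v is ds-completable, then the card G'−v is ds-completable. -/
open SimpleGraph Finset
open scoped Classical

variable {V : Type*}

lemma key_ncard [Fintype V] (S : Set V) (x y v : V) (hx : x ∈ S) (hy : y ∉ S)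
    (hxv : x ≠ v) (hyv : y ≠ v) :
    ((insert y (S \ {x})) \ {v}).ncard = (S \ {v}).ncard := by
  rw [Set.insert_diff_of_notMem _ (by simpa using hyv), Set.diff_diff_comm,
    Set.ncard_insert_of_notMem (by simp [hy]) (Set.toFinite _),
    Set.ncard_diff_singleton_add_one (by simp [hx, hxv]) (Set.toFinite _)]


/-- The switch ⊗^{ac}_{bd} preserves ds-completability of cards at vertices not involved. -/
theorem stmt4 [Fintype V] (G : SimpleGraph V) (a b c d v : V)
    (hab : a ≠ b) (hac : a ≠ c) (had : a ≠ d) (hbc : b ≠ c) (hbd : b ≠ d) (hcd : c ≠ d)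
    (h1 : G.Adj a c) (h2 : G.Adj b d) (h3 : ¬ G.Adj a d) (h4 : ¬ G.Adj b c)
    (hv : v ∉ ({a, b, c, d} : Set V))
    (hcomp : DsCompletable G v) :
    DsCompletable ((G.deleteEdges {s(a, c), s(b, d)}) ⊔
      SimpleGraph.fromEdgeSet {s(a, d), s(b, c)}) v := by
  set G' := (G.deleteEdges {s(a, c), s(b, d)}) ⊔
      SimpleGraph.fromEdgeSet {s(a, d), s(b, c)} with hG'
  simp only [Set.mem_insert_iff, Set.mem_singleton_iff, not_or] at hv
  obtain ⟨hva, hvb, hvc, hvd⟩ := hv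
  have hadj : ∀ u, G'.Adj v u ↔ G.Adj v u := by
    intro u
    simp only [hG', sup_adj, deleteEdges_adj, fromEdgeSet_adj,
      Set.mem_insert_iff, Set.mem_singleton_iff, Sym2.eq, Sym2.rel_iff',
      Prod.mk.injEq, Prod.swap_prod_mk]
    aesop
  have hdeg : ∀ u, cardDeg G' v u = cardDeg G v u := by
    intro u
    unfold cardDeg
    by_cases hua : u = a
    · subst hua
      have hn : G'.neighborSet u = insert d (G.neighborSet u \ {c}) := by
        ext w
        simp only [hG', mem_neighborSet, sup_adj, deleteEdges_adj, fromEdgeSet_adj,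
          Set.mem_insert_iff, Set.mem_singleton_iff, Sym2.eq, Sym2.rel_iff',
          Prod.mk.injEq, Prod.swap_prod_mk, Set.mem_diff]
        aesop
      rw [hn, key_ncard (G.neighborSet u) c d v h1 h3 (Ne.symm hvc) (Ne.symm hvd)]
    by_cases hub : u = b
    · subst hub
      have hn : G'.neighborSet u = insert c (G.neighborSet u \ {d}) := by
        ext w
        simp only [hG', mem_neighborSet, sup_adj, deleteEdges_adj, fromEdgeSet_adj,
          Set.mem_insert_iff, Set.mem_singleton_iff, Sym2.eq, Sym2.rel_iff',
          Prod.mk.injEq, Prod.swap_prod_mk, Set.mem_diff]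
        aesop
      rw [hn, key_ncard (G.neighborSet u) d c v h2 h4 (Ne.symm hvd) (Ne.symm hvc)]
    by_cases huc : u = c
    · subst huc
      have hn : G'.neighborSet u = insert b (G.neighborSet u \ {a}) := by
        ext w
        simp only [hG', mem_neighborSet, sup_adj, deleteEdges_adj, fromEdgeSet_adj,
          Set.mem_insert_iff, Set.mem_singleton_iff, Sym2.eq, Sym2.rel_iff',
          Prod.mk.injEq, Prod.swap_prod_mk, Set.mem_diff]
        aesop
      rw [hn, key_ncard (G.neighborSet u) a b v h1.symm (fun h => h4 h.symm) (Ne.symm hva) (Ne.symm hvb)]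
    by_cases hud : u = d
    · subst hud
      have hn : G'.neighborSet u = insert a (G.neighborSet u \ {b}) := by
        ext w
        simp only [hG', mem_neighborSet, sup_adj, deleteEdges_adj, fromEdgeSet_adj,
          Set.mem_insert_iff, Set.mem_singleton_iff, Sym2.eq, Sym2.rel_iff',
          Prod.mk.injEq, Prod.swap_prod_mk, Set.mem_diff]
        aesop
      rw [hn, key_ncard (G.neighborSet u) b a v h2.symm (fun h => h3 h.symm) (Ne.symm hvb) (Ne.symm hva)]
    · have hn : G'.neighborSet u = G.neighborSet u := by
        ext w
        simp only [hG', mem_neighborSet, sup_adj, deleteEdges_adj, fromEdgeSet_adj,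
          Set.mem_insert_iff, Set.mem_singleton_iff, Sym2.eq, Sym2.rel_iff',
          Prod.mk.injEq, Prod.swap_prod_mk]
        aesop
      rw [hn]
  intro d'
  rcases hcomp d' with h | h
  · left; intro u hu hd; rw [hadj]; exact h u hu (hdeg u ▸ hd)
  · right; intro u hu hd; rw [hadj]; exact h u hu (hdeg u ▸ hd)
end

section
/- A simple graph G contains a ds-completable card if and only if its complement graph Ḡ contains a ds-completable card. -/
open SimpleGraph Finset
open scoped Classical

variable {V : Type*}

theorem SimpleGraph.neighborSet_compl_sdiff_singleton (G : SimpleGraph V) (u v : V) :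
    Gᶜ.neighborSet u \ {v} = (G.neighborSet u \ {v})ᶜ \ {u, v} := by
  ext w
  simp only [neighborSet_compl, Set.mem_sdiff, Set.mem_compl_iff, mem_neighborSet,
    Set.mem_singleton_iff, not_and, Decidable.not_not, Set.mem_insert_iff, not_or]
  tauto

theorem cardDeg_add_cardDeg_compl [Finite V] (G : SimpleGraph V) {u v : V} (huv : u ≠ v) :
    cardDeg G v u + cardDeg Gᶜ v u = Nat.card V - 2 := by
  have hsub : ({u, v} : Set V) ⊆ (G.neighborSet u \ {v})ᶜ := by
    simp [Set.insert_subset_iff]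
  have hpair := Set.ncard_le_ncard hsub
  have hcompl := Set.ncard_compl_add_ncard (G.neighborSet u \ {v})
  rw [cardDeg, cardDeg, G.neighborSet_compl_sdiff_singleton, Set.ncard_sdiff hsub]
  rw [Set.ncard_pair huv] at hpair ⊢
  omega

/-- The degree class `d` of the card `Gᶜ - v` is the degree class `|V| - 2 - d` of `G - v`,
with adjacency to `v` flipped. -/
theorem DsCompletable.compl [Finite V] {G : SimpleGraph V} {v : V} (h : DsCompletable G v) :
    DsCompletable Gᶜ v := by
  intro d
  have hdeg : ∀ u, u ≠ v → cardDeg Gᶜ v u = d → cardDeg G v u = Nat.card V - 2 - d := by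
    intro u hu hd
    have := cardDeg_add_cardDeg_compl G hu
    omega
  rcases h (Nat.card V - 2 - d) with hadj | hnadj
  · exact .inr fun u hu hd hc => hc.2 (hadj u hu (hdeg u hu hd))
  · exact .inl fun u hu hd => ⟨hu.symm, hnadj u hu (hdeg u hu hd)⟩

theorem dsCompletable_compl_iff [Finite V] {G : SimpleGraph V} {v : V} :
    DsCompletable Gᶜ v ↔ DsCompletable G v :=
  ⟨fun h => compl_compl G ▸ h.compl, DsCompletable.compl⟩

/-- A graph has a ds-completable card iff its complement does. -/
theorem stmt5 [Fintype V] (G : SimpleGraph V) :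
    (∃ v : V, DsCompletable G v) ↔ (∃ v : V, DsCompletable Gᶜ v) := by
  simp_rw [dsCompletable_compl_iff]
end

section
/- In a simple graph G, if a vertex v has no bad neighbours (i.e., no neighbour w of v has a vertex of degree d_w − 1 present in G), then the card G−v is ds-completable. -/
open SimpleGraph Finset
open scoped Classical

variable {V : Type*}

theorem deg_eq_cardDeg_add_one_of_adj [Finite V] {G : SimpleGraph V} {v u : V}
    (hadj : G.Adj v u) : deg G u = cardDeg G v u + 1 :=
  (Set.ncard_sdiff_singleton_add_one hadj.symm (Set.toFinite _)).symm

theorem deg_eq_cardDeg_of_not_adj {G : SimpleGraph V} {v u : V} (hnadj : ¬ G.Adj v u) :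
    deg G u = cardDeg G v u := by
  rw [cardDeg, Set.sdiff_singleton_eq_self fun hv => hnadj hv.symm, deg]

theorem bad_of_cardDeg_eq [Finite V] {G : SimpleGraph V} {v u w : V} (hu : G.Adj v u)
    (hw : ¬ G.Adj v w) (hdeg : cardDeg G v u = cardDeg G v w) : Bad G u :=
  ⟨w, by rw [deg_eq_cardDeg_of_not_adj hw, deg_eq_cardDeg_add_one_of_adj hu, hdeg]⟩

/-- A vertex with no bad neighbours has a ds-completable card. -/
theorem stmt7 [Fintype V] (G : SimpleGraph V) (v : V)
    (h : ∀ w : V, G.Adj v w → ¬ Bad G w) : DsCompletable G v := by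
  intro d
  rw [or_iff_not_imp_right]
  intro hsome u' _ hu'd
  simp only [not_forall, not_not] at hsome
  obtain ⟨u, -, hud, hu⟩ := hsome
  by_contra hu'
  exact h u hu (bad_of_cardDeg_eq hu hu' (hud.trans hu'd.symm))
end

section
/- Let G be a simple graph with no ds-completable card, let j be a vertex set containing no bad vertex, and let i be a set disjoint from j. Let B be the set of all bad vertices, let g = i ∖ B (the good vertices of i), let m_g be the degree sum of g and n_g = |g|, and let E(X, j) denote the number of edges between a vertex set X and j. Then E(B, j) ≥ E(i∪B, j) − (m_g − n_g). -/
open SimpleGraph Finset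
open scoped Classical

variable {V : Type*}

lemma key_aux [Fintype V] (G : SimpleGraph V) (h : ∀ v : V, ¬ DsCompletable G v)
    (j : Finset V) (hj : ∀ w ∈ j, ¬ Bad G w) (v : V)
    (hnb : ∀ u, G.Adj v u → u ∈ j) : False := by
  apply h v
  intro d
  by_cases hex : ∃ u, u ≠ v ∧ cardDeg G v u = d ∧ G.Adj v u
  · left
    obtain ⟨u1, hu1v, hu1d, hu1a⟩ := hex
    intro u2 hu2v hu2d
    by_contra hna
    have h1 : cardDeg G v u1 + 1 = deg G u1 := by
      unfold cardDeg deg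
      rw [Set.ncard_diff_singleton_add_one (by simpa using hu1a.symm) (Set.toFinite _)]
    have h2 : cardDeg G v u2 = deg G u2 := by
      unfold cardDeg deg
      rw [Set.diff_singleton_eq_self (by simpa using fun h : G.Adj u2 v => hna h.symm)]
    exact hj u1 (hnb u1 hu1a) ⟨u2, by omega⟩
  · right
    intro u hu hud ha
    exact hex ⟨u, hu, hud, ha⟩

lemma stubs_eq_sum [Fintype V] (G : SimpleGraph V) (s j : Finset V) :
    stubs G s j = ∑ v ∈ s, (j.filter (G.Adj v)).card := by
  unfold stubs
  rw [Finset.card_filter, Finset.sum_product]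
  exact Finset.sum_congr rfl fun v _ => (Finset.card_filter _ _).symm

/-- In a graph with no ds-completable card, for a good set `j` and a disjoint set `i` with
good part `g = i ∖ B`, the edges between `B` and `j` number at least
`E(i ∪ B, j) − (m_g − n_g)`. -/
theorem stmt17 [Fintype V] (G : SimpleGraph V)
    (h : ∀ v : V, ¬ DsCompletable G v) (i j : Finset V) (hd : Disjoint i j)
    (hj : ∀ w ∈ j, ¬ Bad G w) :
    stubs G (i ∪ univ.filter (fun v => Bad G v)) j +
        (i \ univ.filter (fun v => Bad G v)).card ≤
      stubs G (univ.filter (fun v => Bad G v)) j +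
        ∑ v ∈ i \ univ.filter (fun v => Bad G v), deg G v := by
  classical
  set B := univ.filter (fun v => Bad G v) with hB
  have hkey : ∀ v ∈ i \ B, (j.filter (G.Adj v)).card + 1 ≤ deg G v := by
    intro v _
    have hex : ¬ ∀ u, G.Adj v u → u ∈ j := fun hall => key_aux G h j hj v hall
    push_neg at hex
    obtain ⟨u, hau, huj⟩ := hex
    have hsub : j.filter (G.Adj v) ⊆ G.neighborFinset v := by
      intro x hx
      simp only [Finset.mem_filter] at hx
      simpa using hx.2
    have hlt := Finset.card_lt_card ((Finset.ssubset_iff_of_subset hsub).mpr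
      ⟨u, by simpa using hau, by simp [huj]⟩)
    have hdeg : deg G v = (G.neighborFinset v).card := by
      unfold deg
      rw [SimpleGraph.neighborFinset_def, Set.ncard_eq_toFinset_card']
    omega
  calc stubs G (i ∪ B) j + (i \ B).card
      = (∑ v ∈ i \ B, (j.filter (G.Adj v)).card + ∑ v ∈ B, (j.filter (G.Adj v)).card)
          + (i \ B).card := by
        rw [stubs_eq_sum, ← Finset.sdiff_union_self_eq_union,
          Finset.sum_union Finset.sdiff_disjoint]
    _ = ∑ v ∈ B, (j.filter (G.Adj v)).card
          + ∑ v ∈ i \ B, ((j.filter (G.Adj v)).card + 1) := by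
        rw [Finset.sum_add_distrib, Finset.sum_const, smul_eq_mul, mul_one]
        ring
    _ ≤ ∑ v ∈ B, (j.filter (G.Adj v)).card + ∑ v ∈ i \ B, deg G v := by
        exact Nat.add_le_add_left (Finset.sum_le_sum hkey) _
    _ = stubs G B j + ∑ v ∈ i \ B, deg G v := by rw [stubs_eq_sum]
end
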